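/- Let ω > 0, q the exponentially decaying even soliton, and ψ_A(x) = q(x+A) − q(x−A) for x ≥ 0. Then for large A, ∫₀^∞ |ψ_A(x)|²/x² dx ≤ (4/A²)∫_{−∞}^∞ |q|² dx + O(e^{−√ω A}/A²). -/

import Mathlib

/-!
Write `ψ(x) = q(x + A) - q(x - A)` and `r = √ω`. Positivity and decay of `q` give
`|ψ(x)| ≤ M e^{-r(A-x)}` for `x ≥ 0`; since `q` is even, `ψ(x) = q(A + x) - q(A - x)`, and the mean
value theorem sharpens this to `|ψ(x)| ≤ 2x · M e^{-r(A-x)}`. On `(A/2, ∞)` we use `1/x² ≤ 4/A²` and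
`ψ² ≤ q(x + A)² + q(x - A)²`: the second term integrates to at most `∫ q²`, the first to
`O(e^{-rA})`. On `(0, A/2]` the mean value bound (for `x < A/4`, where `e^{-rA/4}` absorbs `A²`)
and `1/x² ≤ 16/A²` (for `x ≥ A/4`) dominate `ψ²/x²` by a multiple of `e^{rx - 3rA/2}/A²`, whose
integral is `O(e^{-rA}/A²)`.
-/

open MeasureTheory Set Real

lemma integrable_exp_neg_mul_abs {b : ℝ} (hb : 0 < b) :
    Integrable fun x : ℝ => exp (-b * |x|) := by
  rw [← integrableOn_univ, ← Iic_union_Ioi (a := 0), integrableOn_union]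
  constructor
  · refine (integrableOn_exp_mul_Iic hb 0).congr_fun (fun x hx => ?_) measurableSet_Iic
    rw [abs_of_nonpos hx, neg_mul_neg]
  · refine (integrableOn_exp_mul_Ioi (neg_neg_of_pos hb) 0).congr_fun (fun x hx => ?_)
      measurableSet_Ioi
    rw [abs_of_pos hx]

lemma integrable_sq_of_abs_le_mul_exp {f : ℝ → ℝ} {M r : ℝ} (hf : Continuous f) (hr : 0 < r)
    (hdecay : ∀ x, |f x| ≤ M * exp (-r * |x|)) : Integrable fun x => f x ^ 2 := by
  refine ((integrable_exp_neg_mul_abs (mul_pos two_pos hr)).const_mul (M ^ 2)).mono'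
    (hf.pow 2).aestronglyMeasurable (ae_of_all _ fun x => ?_)
  calc ‖f x ^ 2‖ = |f x| ^ 2 := by rw [norm_pow, norm_eq_abs]
    _ ≤ (M * exp (-r * |x|)) ^ 2 := pow_le_pow_left₀ (abs_nonneg _) (hdecay x) 2
    _ = M ^ 2 * exp (-(2 * r) * |x|) := by rw [mul_pow, sq (exp _), ← exp_add]; ring_nf

lemma sq_mul_exp_neg_le_two {y : ℝ} (hy : 0 ≤ y) : y ^ 2 * exp (-y) ≤ 2 := by
  rw [exp_neg, ← div_eq_mul_inv, div_le_iff₀ (exp_pos y)]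
  nlinarith [quadratic_le_exp_of_nonneg hy]

lemma setIntegral_Ioc_exp_mul_le {a : ℝ} (ha : 0 < a) (b c : ℝ) :
    ∫ x in Ioc b c, exp (a * x) ≤ exp (a * c) / a := by
  rw [← integral_exp_mul_Iic ha c]
  exact setIntegral_mono_set (integrableOn_exp_mul_Iic ha c)
    (ae_of_all _ fun _ => (exp_pos _).le) Ioc_subset_Iic_self.eventuallyLE

lemma setIntegral_Ioi_le_of_le_on_Ioc_Ioi {f g h : ℝ → ℝ} {a b : ℝ} (hab : a ≤ b)
    (hf : AEStronglyMeasurable f) (hf₀ : ∀ x, 0 ≤ f x)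
    (hg : IntegrableOn g (Ioc a b)) (hh : IntegrableOn h (Ioi b))
    (hfg : ∀ x ∈ Ioc a b, f x ≤ g x) (hfh : ∀ x ∈ Ioi b, f x ≤ h x) :
    ∫ x in Ioi a, f x ≤ (∫ x in Ioc a b, g x) + ∫ x in Ioi b, h x := by
  have dominated {s : Set ℝ} {k : ℝ → ℝ} (hs : MeasurableSet s) (hk : IntegrableOn k s volume)
      (hfk : ∀ x ∈ s, f x ≤ k x) : IntegrableOn f s volume :=
    hk.mono' hf.restrict <| ae_restrict_of_forall_mem hs fun x hx => by
      rw [norm_eq_abs, abs_of_nonneg (hf₀ x)]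
      exact hfk x hx
  have hfg' := dominated measurableSet_Ioc hg hfg
  have hfh' := dominated measurableSet_Ioi hh hfh
  rw [← Ioc_union_Ioi_eq_Ioi hab,
    setIntegral_union Ioc_disjoint_Ioi_same measurableSet_Ioi hfg' hfh']
  exact add_le_add (setIntegral_mono_on hfg' hg measurableSet_Ioc hfg)
    (setIntegral_mono_on hfh' hh measurableSet_Ioi hfh)

section ShiftedDifference

variable {q F : ℝ → ℝ} {M r A x : ℝ}

lemma le_mul_exp_neg_of_le_abs (hF : ∀ y, F y ≤ M * exp (-r * |y|)) (hM : 0 ≤ M) (hr : 0 ≤ r)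
    {y d : ℝ} (hd : d ≤ |y|) : F y ≤ M * exp (-r * d) :=
  (hF y).trans <| mul_le_mul_of_nonneg_left (exp_le_exp.2 (by nlinarith)) hM

lemma abs_sub_shift_le (hq₀ : ∀ y, 0 ≤ q y) (hq : ∀ y, q y ≤ M * exp (-r * |y|)) (hM : 0 ≤ M)
    (hr : 0 ≤ r) (hx : 0 ≤ x) :
    |q (x + A) - q (x - A)| ≤ M * exp (-r * (A - x)) :=
  abs_sub_le_of_nonneg_of_le (hq₀ _)
    (le_mul_exp_neg_of_le_abs hq hM hr (le_abs.2 (Or.inl (by linarith)))) (hq₀ _)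
    (le_mul_exp_neg_of_le_abs hq hM hr (le_abs.2 (Or.inr (by linarith))))

lemma abs_sub_shift_le_mul (hq_even : ∀ y, q (-y) = q y) (hqd : Differentiable ℝ q)
    (hq' : ∀ y, |deriv q y| ≤ M * exp (-r * |y|)) (hM : 0 ≤ M) (hr : 0 ≤ r) (hx : 0 ≤ x) :
    |q (x + A) - q (x - A)| ≤ M * exp (-r * (A - x)) * (2 * x) := by
  have hbound : ∀ t ∈ Icc (A - x) (A + x), ‖deriv q t‖ ≤ M * exp (-r * (A - x)) :=
    fun t ht => le_mul_exp_neg_of_le_abs hq' hM hr (ht.1.trans (le_abs_self t))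
  have hmvt := (convex_Icc (A - x) (A + x)).norm_image_sub_le_of_norm_deriv_le
    (fun t _ => hqd t) hbound (left_mem_Icc.2 (by linarith)) (right_mem_Icc.2 (by linarith))
  rw [← neg_sub A x, hq_even, add_comm]
  rwa [add_sub_sub_cancel, norm_eq_abs, norm_eq_abs, abs_of_nonneg (by linarith : 0 ≤ x + x),
    ← two_mul] at hmvt

lemma sq_sub_shift_div_sq_le (hq₀ : ∀ y, 0 ≤ q y) (hq : ∀ y, q y ≤ M * exp (-r * |y|))
    (hM : 0 ≤ M) (hr : 0 ≤ r) (hA : 0 < A) (hx : A / 2 ≤ x) :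
    (q (x + A) - q (x - A)) ^ 2 / x ^ 2
      ≤ 4 / A ^ 2 * (M ^ 2 * exp (-(2 * r) * x) + q (x - A) ^ 2) := by
  have hright : q (x + A) ≤ M * exp (-r * x) :=
    le_mul_exp_neg_of_le_abs hq hM hr (le_abs.2 (Or.inl (by linarith)))
  have hright_sq : q (x + A) ^ 2 ≤ M ^ 2 * exp (-(2 * r) * x) := by
    calc q (x + A) ^ 2 ≤ (M * exp (-r * x)) ^ 2 := pow_le_pow_left₀ (hq₀ _) hright 2
      _ = M ^ 2 * exp (-(2 * r) * x) := by rw [mul_pow, sq (exp _), ← exp_add]; ring_nf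
  calc (q (x + A) - q (x - A)) ^ 2 / x ^ 2
      ≤ (q (x + A) ^ 2 + q (x - A) ^ 2) / (A / 2) ^ 2 :=
        div_le_div₀ (by positivity) (by nlinarith [mul_nonneg (hq₀ (x + A)) (hq₀ (x - A))])
          (by positivity) (pow_le_pow_left₀ (by positivity) hx 2)
    _ = 4 / A ^ 2 * (q (x + A) ^ 2 + q (x - A) ^ 2) := by field_simp; ring
    _ ≤ 4 / A ^ 2 * (M ^ 2 * exp (-(2 * r) * x) + q (x - A) ^ 2) := by gcongr

/- `16` comes from `1/x² ≤ 16/A²` when `x ≥ A/4`, and `128/r²` from `A² e^{-rA/4} ≤ 32/r²`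
when `x < A/4`. -/
lemma sq_div_sq_le_of_abs_le {s : ℝ} (hr : 0 < r) (hx : 0 < x) (hxA : x ≤ A / 2)
    (h₁ : |s| ≤ M * exp (-r * (A - x))) (h₂ : |s| ≤ M * exp (-r * (A - x)) * (2 * x)) :
    s ^ 2 / x ^ 2 ≤ (16 + 128 / r ^ 2) * M ^ 2 / A ^ 2 * exp (-(3 / 2 * r * A)) * exp (r * x) := by
  have hA : 0 < A := by linarith
  set w := exp (-(3 / 2 * r * A)) * exp (r * x)
  have hw : 0 ≤ M ^ 2 * w := by positivity
  have hE : (M * exp (-r * (A - x))) ^ 2 = M ^ 2 * w * exp (-(r * (A / 2 - x))) := by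
    simp only [w, mul_pow, sq (exp _), ← exp_add, mul_assoc]
    ring_nf
  have hK : 16 ≤ 16 + 128 / r ^ 2 := le_add_of_nonneg_right (by positivity)
  rcases le_or_gt (A / 4) x with hfar | hnear
  · calc s ^ 2 / x ^ 2 ≤ (M * exp (-r * (A - x))) ^ 2 / (A / 4) ^ 2 :=
          div_le_div₀ (sq_nonneg _) (sq_le_sq' (abs_le.1 h₁).1 (abs_le.1 h₁).2) (by positivity)
            (pow_le_pow_left₀ (by positivity) hfar 2)
      _ = 16 / A ^ 2 * (M ^ 2 * w) * exp (-(r * (A / 2 - x))) := by rw [hE]; field_simp; ring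
      _ ≤ 16 / A ^ 2 * (M ^ 2 * w) * 1 := by gcongr; exact exp_le_one_iff.2 (by nlinarith)
      _ ≤ (16 + 128 / r ^ 2) / A ^ 2 * (M ^ 2 * w) := by rw [mul_one]; gcongr
      _ = _ := by ring
  · have hpoly : (r * A / 4) ^ 2 * exp (-(r * A / 4)) ≤ 2 := sq_mul_exp_neg_le_two (by positivity)
    have htail : 4 * exp (-(r * (A / 2 - x))) ≤ 128 / r ^ 2 / A ^ 2 := by
      have : exp (-(r * (A / 2 - x))) ≤ exp (-(r * A / 4)) := exp_le_exp.2 (by nlinarith)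
      rw [le_div_iff₀ (by positivity), le_div_iff₀ (by positivity)]
      nlinarith [exp_pos (-(r * A / 4))]
    calc s ^ 2 / x ^ 2 ≤ 4 * (M * exp (-r * (A - x))) ^ 2 := by
          rw [div_le_iff₀ (by positivity), ← sq_abs]
          nlinarith [pow_le_pow_left₀ (abs_nonneg s) h₂ 2]
      _ = 4 * exp (-(r * (A / 2 - x))) * (M ^ 2 * w) := by rw [hE]; ring
      _ ≤ 128 / r ^ 2 / A ^ 2 * (M ^ 2 * w) := by gcongr
      _ ≤ (16 + 128 / r ^ 2) / A ^ 2 * (M ^ 2 * w) := by gcongr; linarith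
      _ = _ := by ring

lemma setIntegral_Ioc_const_mul_exp_le (hr : 0 < r) {c : ℝ} (hc : 0 ≤ c) :
    ∫ x in Ioc 0 (A / 2), c * exp (-(3 / 2 * r * A)) * exp (r * x) ≤ c / r * exp (-r * A) := by
  rw [integral_const_mul]
  calc _ ≤ c * exp (-(3 / 2 * r * A)) * (exp (r * (A / 2)) / r) := by
        gcongr; exact setIntegral_Ioc_exp_mul_le hr _ _
    _ = c / r * exp (-(3 / 2 * r * A) + r * (A / 2)) := by rw [exp_add]; ring
    _ = c / r * exp (-r * A) := by ring_nf

lemma setIntegral_Ioi_exp_add_sq_shift_le (hq2 : Integrable fun x => q x ^ 2) (hr : 0 < r)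
    {c : ℝ} (hc : 0 ≤ c) :
    ∫ x in Ioi (A / 2), c * (M ^ 2 * exp (-(2 * r) * x) + q (x - A) ^ 2)
      ≤ c * (M ^ 2 * exp (-r * A) / (2 * r) + ∫ x, q x ^ 2) := by
  have hshift : ∫ x in Ioi (A / 2), q (x - A) ^ 2 ≤ ∫ x, q x ^ 2 :=
    (setIntegral_le_integral (hq2.comp_sub_right A) (ae_of_all _ fun _ => sq_nonneg _)).trans_eq
      (integral_sub_right_eq_self (fun x => q x ^ 2) A)
  have h2r : -(2 * r) < 0 := neg_neg_of_pos (mul_pos two_pos hr)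
  rw [integral_const_mul, integral_add ((integrableOn_exp_mul_Ioi h2r _).const_mul _)
    (hq2.comp_sub_right A).integrableOn, integral_const_mul, integral_exp_mul_Ioi h2r,
    neg_div_neg_eq, show -(2 * r) * (A / 2) = -r * A by ring, ← mul_div_assoc]
  gcongr

end ShiftedDifference

/-- **Hardy-term estimate for cut soliton differences.** Let `q` be the even, positive,
exponentially decaying soliton and `ψ_A(x) = q(x+A) − q(x−A)`. Then for large `A`,
`∫₀^∞ |ψ_A(x)|²/x² dx ≤ (4/A²)∫_ℝ |q|² dx + O(e^{−√ω A}/A²)`. -/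
theorem psiA_hardy_estimate (ω : ℝ) (hω : 0 < ω)
    (q : ℝ → ℝ) (M : ℝ) (hM : 0 < M)
    (hq_even : ∀ x, q (-x) = q x) (hq_pos : ∀ x, 0 < q x)
    (hq_smooth : ContDiff ℝ 2 q)
    (hq_decay : ∀ x, q x ≤ M * Real.exp (-(Real.sqrt ω) * |x|))
    (hq'_decay : ∀ x, |deriv q x| ≤ M * Real.exp (-(Real.sqrt ω) * |x|)) :
    ∃ C A₀ : ℝ, 0 < C ∧ 0 < A₀ ∧ ∀ A ≥ A₀,
      (∫ x in Ioi (0:ℝ), (q (x + A) - q (x - A))^2 / x^2)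
        ≤ (4/A^2) * (∫ x : ℝ, (q x)^2)
          + C * Real.exp (-(Real.sqrt ω) * A) / A^2 := by
  set r := √ω
  have hr : 0 < r := sqrt_pos.2 hω
  have hqc : Continuous q := hq_smooth.continuous
  have hq₀ : ∀ x, 0 ≤ q x := fun x => (hq_pos x).le
  have hq2 : Integrable fun x => q x ^ 2 :=
    integrable_sq_of_abs_le_mul_exp hqc hr fun x => by
      rw [abs_of_pos (hq_pos x)]; exact hq_decay x
  have hqd : Differentiable ℝ q := hq_smooth.differentiable (by norm_num)
  set K := 16 + 128 / r ^ 2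
  refine ⟨K * M ^ 2 / r + 2 * M ^ 2 / r, 1, by positivity, one_pos, fun A hA => ?_⟩
  have hA : 0 < A := one_pos.trans_le hA
  have hfar_int : IntegrableOn (fun x => 4 / A ^ 2 * (M ^ 2 * exp (-(2 * r) * x) + q (x - A) ^ 2))
      (Ioi (A / 2)) :=
    (((integrableOn_exp_mul_Ioi (neg_neg_of_pos (mul_pos two_pos hr)) _).const_mul _).add
      (hq2.comp_sub_right A).integrableOn).const_mul _
  calc _ ≤ (∫ x in Ioc 0 (A / 2), K * M ^ 2 / A ^ 2 * exp (-(3 / 2 * r * A)) * exp (r * x))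
        + ∫ x in Ioi (A / 2), 4 / A ^ 2 * (M ^ 2 * exp (-(2 * r) * x) + q (x - A) ^ 2) :=
        setIntegral_Ioi_le_of_le_on_Ioc_Ioi (f := fun x => (q (x + A) - q (x - A)) ^ 2 / x ^ 2)
          (half_pos hA).le
          ((by fun_prop : Continuous fun x => (q (x + A) - q (x - A)) ^ 2).measurable.div
            (by fun_prop : Measurable fun x : ℝ => x ^ 2)).aestronglyMeasurable
          (fun x => by positivity) (by fun_prop : Continuous _).integrableOn_Ioc hfar_int
          (fun x hx => sq_div_sq_le_of_abs_le hr hx.1 hx.2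
            (abs_sub_shift_le hq₀ hq_decay hM.le hr.le hx.1.le)
            (abs_sub_shift_le_mul hq_even hqd hq'_decay hM.le hr.le hx.1.le))
          (fun x hx => sq_sub_shift_div_sq_le hq₀ hq_decay hM.le hr.le hA hx.le)
    _ ≤ K * M ^ 2 / A ^ 2 / r * exp (-r * A)
        + 4 / A ^ 2 * (M ^ 2 * exp (-r * A) / (2 * r) + ∫ x, q x ^ 2) :=
        add_le_add (setIntegral_Ioc_const_mul_exp_le hr (by positivity))
          (setIntegral_Ioi_exp_add_sq_shift_le hq2 hr (by positivity))
    _ = _ := by ring
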